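/- arXiv:2205.03117 — 2 statements merged into one kernel-verified Lean document; each statement's English description precedes it below -/
import Mathlib

section
/- Let G = (R ⊔ C, E, w) be an edge-weighted bipartite digraph and (M_R, M_C) the corresponding bimatrix game. Let S = S_R ⊔ S_C with S_R ⊆ R, S_C ⊆ C both nonempty, and suppose the induced subgraph G[S] is (α, β) out-regular and undominated. Then the pair of uniform strategies (x_R, x_C) with supp(x_R) = S_R and supp(x_C) = S_C is a Nash equilibrium of (M_R, M_C). -/
open Finset

/-- The uniform mixed strategy with support `S`. -/
noncomputable def unif {α : Type*} [DecidableEq α] (S : Finset α) : α → ℝ :=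
  fun i => if i ∈ S then (1 : ℝ) / S.card else 0

/-- A mixed strategy: nonnegative entries summing to one. -/
def IsMixed {α : Type*} [Fintype α] (x : α → ℝ) : Prop :=
  (∀ i, 0 ≤ x i) ∧ ∑ i, x i = 1

/-- Expected payoff `xRᵀ M xC`. -/
def payoff {R C : Type*} [Fintype R] [Fintype C]
    (M : R → C → ℝ) (xR : R → ℝ) (xC : C → ℝ) : ℝ :=
  ∑ r, ∑ c, xR r * M r c * xC c

/-- `(xR, xC)` is a Nash equilibrium of the bimatrix game `(MR, MC)`. -/
def IsNash {R C : Type*} [Fintype R] [Fintype C]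
    (MR MC : R → C → ℝ) (xR : R → ℝ) (xC : C → ℝ) : Prop :=
  IsMixed xR ∧ IsMixed xC ∧
    (∀ y : R → ℝ, IsMixed y → payoff MR y xC ≤ payoff MR xR xC) ∧
    (∀ z : C → ℝ, IsMixed z → payoff MC xR z ≤ payoff MC xR xC)

lemma unif_mixed {α : Type*} [Fintype α] [DecidableEq α] {S : Finset α}
    (hS : S.Nonempty) : IsMixed (unif S) := by
  constructor
  · intro i
    unfold unif
    split
    · positivity
    · exact le_refl 0
  · unfold unif
    rw [Finset.sum_ite_mem, Finset.univ_inter, Finset.sum_const, nsmul_eq_mul]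
    field_simp

lemma payoff_unif_right {R C : Type*} [Fintype R] [Fintype C] [DecidableEq C]
    (M : R → C → ℝ) (y : R → ℝ) (SC : Finset C) :
    payoff M y (unif SC) = ∑ r, y r * (∑ c ∈ SC, M r c) / SC.card := by
  unfold payoff unif
  refine Finset.sum_congr rfl fun r _ => ?_
  simp only [mul_ite, mul_zero, Finset.sum_ite_mem, Finset.univ_inter]
  rw [Finset.mul_sum, Finset.sum_div]
  exact Finset.sum_congr rfl fun c _ => by ring

lemma payoff_unif_left {R C : Type*} [Fintype R] [Fintype C] [DecidableEq R]
    (M : R → C → ℝ) (z : C → ℝ) (SR : Finset R) :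
    payoff M (unif SR) z = ∑ c, z c * (∑ r ∈ SR, M r c) / SR.card := by
  unfold payoff unif
  rw [Finset.sum_comm]
  refine Finset.sum_congr rfl fun c _ => ?_
  simp only [ite_mul, zero_mul, Finset.sum_ite_mem, Finset.univ_inter]
  rw [Finset.mul_sum, Finset.sum_div]
  exact Finset.sum_congr rfl fun r _ => by ring

/-- If `S = S_R ⊔ S_C` induces an undominated `(α, β)`
out-regular subgraph of the edge-weighted bipartite digraph `(wRC, wCR)`, then
the pair of uniform strategies supported on `S_R`, `S_C` is a Nash equilibrium
of the corresponding bimatrix game. -/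
theorem uniform_nash_of_undominated_out_regular
    {R C : Type*} [Fintype R] [Fintype C] [DecidableEq R] [DecidableEq C]
    (wRC : R → C → ℝ) (wCR : C → R → ℝ)
    (hwRC : ∀ r c, 0 ≤ wRC r c) (hwCR : ∀ c r, 0 ≤ wCR c r)
    (SR : Finset R) (SC : Finset C) (hSR : SR.Nonempty) (hSC : SC.Nonempty)
    (α β : ℝ)
    (hregR : ∀ r ∈ SR, ∑ c ∈ SC, wRC r c = α)
    (hregC : ∀ c ∈ SC, ∑ r ∈ SR, wCR c r = β)
    (hundomR : ∀ r ∉ SR, ∑ c ∈ SC, wRC r c ≤ α)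
    (hundomC : ∀ c ∉ SC, ∑ r ∈ SR, wCR c r ≤ β) :
    IsNash wRC (fun r c => wCR c r) (unif SR) (unif SC) := by
  have hcR : (0:ℝ) < SR.card := by exact_mod_cast Finset.card_pos.mpr hSR
  have hcC : (0:ℝ) < SC.card := by exact_mod_cast Finset.card_pos.mpr hSC
  have hrow : ∀ r, ∑ c ∈ SC, wRC r c ≤ α := fun r => by
    by_cases h : r ∈ SR
    · exact le_of_eq (hregR r h)
    · exact hundomR r h
  have hcol : ∀ c, ∑ r ∈ SR, wCR c r ≤ β := fun c => by
    by_cases h : c ∈ SC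
    · exact le_of_eq (hregC c h)
    · exact hundomC c h
  have key : payoff wRC (unif SR) (unif SC) = α / SC.card := by
    rw [payoff_unif_right]
    have : ∀ r, (unif SR) r * (∑ c ∈ SC, wRC r c) / SC.card
        = (if r ∈ SR then α / (SR.card * SC.card) else 0) := by
      intro r
      unfold unif
      split
      · rw [hregR r ‹_›]; field_simp
      · simp
    rw [Finset.sum_congr rfl fun r _ => this r, Finset.sum_ite_mem,
      Finset.univ_inter, Finset.sum_const, nsmul_eq_mul]
    field_simp
  have key2 : payoff (fun r c => wCR c r) (unif SR) (unif SC) = β / SR.card := by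
    rw [payoff_unif_left]
    have : ∀ c, (unif SC) c * (∑ r ∈ SR, wCR c r) / SR.card
        = (if c ∈ SC then β / (SC.card * SR.card) else 0) := by
      intro c
      unfold unif
      split
      · rw [hregC c ‹_›]; field_simp
      · simp
    rw [Finset.sum_congr rfl fun c _ => this c, Finset.sum_ite_mem,
      Finset.univ_inter, Finset.sum_const, nsmul_eq_mul]
    field_simp
  refine ⟨unif_mixed hSR, unif_mixed hSC, ?_, ?_⟩
  · intro y hy
    rw [key, payoff_unif_right]
    have : ∀ r, y r * (∑ c ∈ SC, wRC r c) / SC.card ≤ y r * α / SC.card := fun r =>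
      div_le_div_of_nonneg_right (mul_le_mul_of_nonneg_left (hrow r) (hy.1 r)) hcC.le
    calc ∑ r, y r * (∑ c ∈ SC, wRC r c) / SC.card
        ≤ ∑ r, y r * α / SC.card := Finset.sum_le_sum fun r _ => this r
      _ = α / SC.card := by rw [← Finset.sum_div, ← Finset.sum_mul, hy.2, one_mul]
  · intro z hz
    rw [key2, payoff_unif_left]
    have : ∀ c, z c * (∑ r ∈ SR, wCR c r) / SR.card ≤ z c * β / SR.card := fun c =>
      div_le_div_of_nonneg_right (mul_le_mul_of_nonneg_left (hcol c) (hz.1 c)) hcR.le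
    calc ∑ c, z c * (∑ r ∈ SR, wCR c r) / SR.card
        ≤ ∑ c, z c * β / SR.card := Finset.sum_le_sum fun c _ => this c
      _ = β / SR.card := by rw [← Finset.sum_div, ← Finset.sum_mul, hz.2, one_mul]
end

section
/- Let G_φ be the digraph from the 3-SAT reduction and suppose S ⊆ V(G_φ) induces an undominated out-regular subgraph meeting both parts. Then for each i ∈ [n], S contains at most one of the variable coordinating vertices y_i and ȳ_i (hence at most one of x_i and x̄_i). -/
open Finset

/-! The edge-weighted bipartite digraph `G_φ` from the 3-SAT reduction.
A 3-CNF formula with `n` variables and `m` clauses is given by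
`cl : Fin m → Fin 3 → Fin n × Bool`: the `k`-th literal of clause `j` is the
variable `(cl j k).1` with sign `(cl j k).2` (`true` = positive). -/

/-- Row-side vertices of `G_φ`: `y_i`, `ȳ_i`, `z_{i1}`, clause vertices `C_j`
and clause coordinating vertices `u_{jk}`. -/
inductive RowV (n m : ℕ) where
  | y (i : Fin n)
  | ybar (i : Fin n)
  | z1 (i : Fin n)
  | Cl (j : Fin m)
  | u (j : Fin m) (k : Fin 3)
  deriving DecidableEq, Fintype

/-- Column-side vertices of `G_φ`: `x_i`, `x̄_i`, `z_{i2}`, clause coordinating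
vertices `v_{jk}` and the additional vertex `a`. -/
inductive ColV (n m : ℕ) where
  | x (i : Fin n)
  | xbar (i : Fin n)
  | z2 (i : Fin n)
  | v (j : Fin m) (k : Fin 3)
  | a
  deriving DecidableEq, Fintype

/-- The variable vertex corresponding to the `k`-th literal of clause `j`. -/
def lit {n m : ℕ} (cl : Fin m → Fin 3 → Fin n × Bool) (j : Fin m) (k : Fin 3) :
    ColV n m :=
  if (cl j k).2 then ColV.x (cl j k).1 else ColV.xbar (cl j k).1

/-- Weights of the arcs of `G_φ` going from the row side to the column side
(weight `0` means "no arc"). -/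
def wR {n m : ℕ} (cl : Fin m → Fin 3 → Fin n × Bool) :
    RowV n m → ColV n m → ℝ
  | RowV.y _, ColV.a => 1
  | RowV.ybar _, ColV.a => 1
  | RowV.z1 i, ColV.z2 i' => if i = i' then 1 else 0
  | RowV.Cl j, ColV.v j' _ => if j = j' then 1 else 0
  | RowV.u j k, c => if c = lit cl j k then 1 else 0
  | _, _ => 0

/-- Weights of the arcs of `G_φ` going from the column side to the row side
(weight `0` means "no arc"). -/
def wC {n m : ℕ} : ColV n m → RowV n m → ℝ
  | ColV.x i, RowV.y i' => if i = i' then (m + n : ℝ) else 0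
  | ColV.xbar i, RowV.ybar i' => if i = i' then (m + n : ℝ) else 0
  | ColV.z2 i, RowV.y i' => if i = i' then (m + n : ℝ) else 0
  | ColV.z2 i, RowV.ybar i' => if i = i' then (m + n : ℝ) else 0
  | ColV.v j k, RowV.u j' k' => if j = j' ∧ k = k' then (m + n : ℝ) else 0
  | ColV.a, RowV.Cl _ => 1
  | ColV.a, RowV.z1 _ => 1
  | _, _ => 0

/-- The assignment `ξ` satisfies the formula `cl`. -/
def Satisfies {n m : ℕ} (cl : Fin m → Fin 3 → Fin n × Bool)
    (ξ : Fin n → Bool) : Prop :=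
  ∀ j : Fin m, ∃ k : Fin 3, ξ (cl j k).1 = (cl j k).2

variable {n m : ℕ}

lemma wC_nonneg (c : ColV n m) (r : RowV n m) : 0 ≤ wC c r := by
  cases c <;> cases r <;> simp only [wC] <;> first | positivity | (split_ifs <;> positivity)

lemma sum_wC_x (SR : Finset (RowV n m)) (i : Fin n) :
    ∑ r ∈ SR, wC (ColV.x i) r = if RowV.y i ∈ SR then ((m:ℝ) + n) else 0 := by
  rw [show (∑ r ∈ SR, wC (ColV.x i) r)
      = ∑ r ∈ SR, (if r = RowV.y i then ((m:ℝ) + n) else 0) from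
    Finset.sum_congr rfl fun r _ => by cases r <;> simp [wC, eq_comm]]
  exact Finset.sum_ite_eq' SR _ _

lemma sum_wC_xbar (SR : Finset (RowV n m)) (i : Fin n) :
    ∑ r ∈ SR, wC (ColV.xbar i) r = if RowV.ybar i ∈ SR then ((m:ℝ) + n) else 0 := by
  rw [show (∑ r ∈ SR, wC (ColV.xbar i) r)
      = ∑ r ∈ SR, (if r = RowV.ybar i then ((m:ℝ) + n) else 0) from
    Finset.sum_congr rfl fun r _ => by cases r <;> simp [wC, eq_comm]]
  exact Finset.sum_ite_eq' SR _ _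

lemma sum_wC_v (SR : Finset (RowV n m)) (j : Fin m) (k : Fin 3) :
    ∑ r ∈ SR, wC (ColV.v j k) r = if RowV.u j k ∈ SR then ((m:ℝ) + n) else 0 := by
  rw [show (∑ r ∈ SR, wC (ColV.v j k) r)
      = ∑ r ∈ SR, (if r = RowV.u j k then ((m:ℝ) + n) else 0) from
    Finset.sum_congr rfl fun r _ => by
      cases r <;> simp [wC, eq_comm, and_comm]]
  exact Finset.sum_ite_eq' SR _ _

lemma sum_wC_z2 (SR : Finset (RowV n m)) (i : Fin n) :
    ∑ r ∈ SR, wC (ColV.z2 i) r =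
      (if RowV.y i ∈ SR then ((m:ℝ) + n) else 0)
      + (if RowV.ybar i ∈ SR then ((m:ℝ) + n) else 0) := by
  rw [show (∑ r ∈ SR, wC (ColV.z2 i) r)
      = ∑ r ∈ SR, ((if r = RowV.y i then ((m:ℝ) + n) else 0)
          + (if r = RowV.ybar i then ((m:ℝ) + n) else 0)) from
    Finset.sum_congr rfl fun r _ => by cases r <;> simp [wC, eq_comm]]
  rw [Finset.sum_add_distrib, Finset.sum_ite_eq' SR, Finset.sum_ite_eq' SR]

lemma sum_wC_a_le (SR : Finset (RowV n m)) :
    ∑ r ∈ SR, wC (ColV.a) r ≤ (m : ℝ) + n := by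
  classical
  set T : Finset (RowV n m) :=
    (univ.image RowV.Cl) ∪ (univ.image (RowV.z1 (n := n) (m := m))) with hT
  have h1 : ∀ r ∈ SR, wC (ColV.a) r = if r ∈ T then (1:ℝ) else 0 := by
    intro r _
    cases r <;> simp [wC, hT]
  rw [Finset.sum_congr rfl h1, Finset.sum_ite_mem]
  have h2 : ((SR ∩ T).card : ℝ) ≤ (T.card : ℝ) := by
    exact_mod_cast Finset.card_le_card (Finset.inter_subset_right)
  have h3 : (T.card : ℝ) ≤ (m : ℝ) + n := by
    have := Finset.card_union_le (univ.image (RowV.Cl (n := n) (m := m)))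
      (univ.image (RowV.z1 (n := n) (m := m)))
    have hm' := Finset.card_image_le (s := (univ : Finset (Fin m))) (f := RowV.Cl (n := n) (m := m))
    have hn' := Finset.card_image_le (s := (univ : Finset (Fin n))) (f := RowV.z1 (n := n) (m := m))
    simp only [Finset.card_univ, Fintype.card_fin] at hm' hn'
    push_cast
    calc (T.card : ℝ) ≤ ((univ.image (RowV.Cl (n := n) (m := m))).card
        + (univ.image (RowV.z1 (n := n) (m := m))).card : ℕ) := by exact_mod_cast this
      _ ≤ ((m + n : ℕ) : ℝ) := by exact_mod_cast Nat.add_le_add hm' hn'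
      _ = (m : ℝ) + n := by push_cast; ring
  calc ∑ r ∈ SR ∩ T, (1:ℝ) = ((SR ∩ T).card : ℝ) := by simp
    _ ≤ (m:ℝ) + n := le_trans h2 h3

lemma sum_wR_y (cl : Fin m → Fin 3 → Fin n × Bool) (SC : Finset (ColV n m)) (i : Fin n) :
    ∑ c ∈ SC, wR cl (RowV.y i) c = if ColV.a ∈ SC then (1:ℝ) else 0 := by
  rw [show (∑ c ∈ SC, wR cl (RowV.y i) c)
      = ∑ c ∈ SC, (if c = ColV.a then (1:ℝ) else 0) from
    Finset.sum_congr rfl fun c _ => by cases c <;> simp [wR]]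
  exact Finset.sum_ite_eq' SC _ _

lemma sum_wR_z1 (cl : Fin m → Fin 3 → Fin n × Bool) (SC : Finset (ColV n m)) (i : Fin n) :
    ∑ c ∈ SC, wR cl (RowV.z1 i) c = if ColV.z2 i ∈ SC then (1:ℝ) else 0 := by
  rw [show (∑ c ∈ SC, wR cl (RowV.z1 i) c)
      = ∑ c ∈ SC, (if c = ColV.z2 i then (1:ℝ) else 0) from
    Finset.sum_congr rfl fun c _ => by cases c <;> simp [wR, eq_comm]]
  exact Finset.sum_ite_eq' SC _ _


/-- If `S = S_R ⊔ S_C` induces an undominated `(α, β)`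
out-regular subgraph of `G_φ` meeting both parts, then for each variable `i`
the set `S` contains at most one of `y_i`, `ȳ_i` and at most one of
`x_i`, `x̄_i`. -/
theorem at_most_one_literal_side
    {n m : ℕ} (cl : Fin m → Fin 3 → Fin n × Bool)
    (hm : 1 ≤ m) (hn : 1 ≤ n)
    (SR : Finset (RowV n m)) (SC : Finset (ColV n m))
    (hSR : SR.Nonempty) (hSC : SC.Nonempty)
    (α β : ℝ)
    (hregR : ∀ r ∈ SR, ∑ c ∈ SC, wR cl r c = α)
    (hregC : ∀ c ∈ SC, ∑ r ∈ SR, wC c r = β)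
    (hundomR : ∀ r ∉ SR, ∑ c ∈ SC, wR cl r c ≤ α)
    (hundomC : ∀ c ∉ SC, ∑ r ∈ SR, wC c r ≤ β) :
    ∀ i : Fin n,
      ¬ (RowV.y i ∈ SR ∧ RowV.ybar i ∈ SR) ∧
      ¬ (ColV.x i ∈ SC ∧ ColV.xbar i ∈ SC) := by
  have hm1 : (1:ℝ) ≤ (m:ℝ) := by exact_mod_cast hm
  have hn1 : (1:ℝ) ≤ (n:ℝ) := by exact_mod_cast hn
  have hleβ : ∀ c : ColV n m, ∑ r ∈ SR, wC c r ≤ β := by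
    intro c
    by_cases h : c ∈ SC
    · exact le_of_eq (hregC c h)
    · exact hundomC c h
  -- Part 1 : at most one of y i, ybar i
  have hY : ∀ i : Fin n, ¬ (RowV.y i ∈ SR ∧ RowV.ybar i ∈ SR) := by
    rintro i ⟨hy, hyb⟩
    have h2 : ∑ r ∈ SR, wC (ColV.z2 i) r = 2 * ((m:ℝ) + n) := by
      rw [sum_wC_z2, if_pos hy, if_pos hyb]; ring
    have hβ : 2 * ((m:ℝ) + n) ≤ β := h2 ▸ hleβ (ColV.z2 i)
    -- a ∉ SC
    have ha : ColV.a ∉ SC := by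
      intro h
      have := hregC _ h
      have hle := sum_wC_a_le SR (n := n) (m := m)
      linarith [this ▸ hle]
    -- some z2 i0 ∈ SC
    obtain ⟨c0, hc0⟩ := hSC
    obtain ⟨i0, hi0⟩ : ∃ i0 : Fin n, ColV.z2 i0 ∈ SC := by
      have hceq := hregC _ hc0
      cases c0 with
      | x i' =>
        rw [sum_wC_x] at hceq
        split_ifs at hceq <;> linarith
      | xbar i' =>
        rw [sum_wC_xbar] at hceq
        split_ifs at hceq <;> linarith
      | z2 i' => exact ⟨i', hc0⟩
      | v j' k' =>
        rw [sum_wC_v] at hceq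
        split_ifs at hceq <;> linarith
      | a => exact absurd hc0 ha
    -- α = 0
    have hα : α = 0 := by
      have := hregR _ hy
      rw [sum_wR_y, if_neg ha] at this
      linarith
    -- z1 i0 has out-weight 1
    have hz1 : ∑ c ∈ SC, wR cl (RowV.z1 i0) c = 1 := by
      rw [sum_wR_z1, if_pos hi0]
    by_cases h : RowV.z1 i0 ∈ SR
    · have := hregR _ h; rw [hz1] at this; linarith
    · have := hundomR _ h; rw [hz1] at this; linarith
  -- β > 0
  have hβpos : 0 < β := by
    obtain ⟨r0, hr0⟩ := hSR
    cases r0 with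
    | y i' =>
      have := hleβ (ColV.x i')
      rw [sum_wC_x, if_pos hr0] at this; linarith
    | ybar i' =>
      have := hleβ (ColV.xbar i')
      rw [sum_wC_xbar, if_pos hr0] at this; linarith
    | z1 i' =>
      have h1 : (1:ℝ) ≤ ∑ r ∈ SR, wC (ColV.a) r := by
        have := Finset.single_le_sum (f := fun r => wC (ColV.a (n := n) (m := m)) r)
          (fun r _ => wC_nonneg _ r) hr0
        simpa [wC] using this
      linarith [hleβ (ColV.a)]
    | Cl j' =>
      have h1 : (1:ℝ) ≤ ∑ r ∈ SR, wC (ColV.a) r := by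
        have := Finset.single_le_sum (f := fun r => wC (ColV.a (n := n) (m := m)) r)
          (fun r _ => wC_nonneg _ r) hr0
        simpa [wC] using this
      linarith [hleβ (ColV.a)]
    | u j' k' =>
      have := hleβ (ColV.v j' k')
      rw [sum_wC_v, if_pos hr0] at this; linarith
  intro i
  refine ⟨hY i, ?_⟩
  rintro ⟨hx, hxb⟩
  have h1 := hregC _ hx
  rw [sum_wC_x] at h1
  have h2 := hregC _ hxb
  rw [sum_wC_xbar] at h2
  split_ifs at h1 with hy
  · split_ifs at h2 with hyb
    · exact hY i ⟨hy, hyb⟩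
    · linarith
  · linarith
end
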